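/- arXiv:2311.04100 — 4 statements merged into one kernel-verified Lean document; each statement's English description precedes it below -/
import Mathlib

section
/- Let x, y ∈ F be (encodings of) feasible schedules of an FJSP instance whose makespans satisfy max(C(x), C(y)) < n_T/2. Then there exist a natural number k and transpositions τ_1, …, τ_k ∈ S_N such that (τ_k ∘ ⋯ ∘ τ_1)(x) = y and, for every 1 ≤ l ≤ k, the intermediate bit string (τ_l ∘ ⋯ ∘ τ_1)(x) lies in F. -/
/-- An instance of the flexible job-shop problem (FJSP): `nJ` jobs, `nM` machines,
`nT` time slots; job `j` has `p j` operations; `allowed j o` is the set of machines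
operation `O_{j,o}` may run on; `d j o m` is the duration of operation `O_{j,o}` on
machine `M_m`. -/
structure FJSP where
  nJ : ℕ
  nM : ℕ
  nT : ℕ
  p : Fin nJ → ℕ
  allowed : (j : Fin nJ) → Fin (p j) → Finset (Fin nM)
  d : (j : Fin nJ) → Fin (p j) → Fin nM → ℕ

namespace FJSP

variable (P : FJSP)

/-- An operation `O_{j,o}` is a pair of a job index and an operation index. -/
abbrev Op := (j : Fin P.nJ) × Fin (P.p j)

/-- An assignment `(O_{j,o}, M_m, T_t)`. -/
abbrev Assignment := P.Op × Fin P.nM × Fin P.nT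

/-- A schedule: a (finite) set of assignments. -/
abbrev Schedule := Finset P.Assignment

/-- The (1-indexed) time value of the time slot `T_t`. -/
def timeVal (t : Fin P.nT) : ℕ := t.val + 1

/-- The duration of an assignment. -/
def dur (a : P.Assignment) : ℕ := P.d a.1.1 a.1.2 a.2.1

/-- Feasibility of a schedule: the assignment constraint (every operation occurs in
exactly one assignment, on an allowed machine), the order constraint, and the machine
constraint. -/
def Feasible (S : P.Schedule) : Prop :=
  (∀ op : P.Op, ∃! mt : Fin P.nM × Fin P.nT, (op, mt.1, mt.2) ∈ S) ∧
  (∀ a ∈ S, a.2.1 ∈ P.allowed a.1.1 a.1.2) ∧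
  (∀ (j : Fin P.nJ) (o o' : Fin (P.p j)) (m m' : Fin P.nM) (t t' : Fin P.nT),
      (⟨⟨j, o⟩, m, t⟩ : P.Assignment) ∈ S → (⟨⟨j, o'⟩, m', t'⟩ : P.Assignment) ∈ S →
      o < o' → P.timeVal t + P.d j o m ≤ P.timeVal t') ∧
  (∀ (op op' : P.Op) (m : Fin P.nM) (t t' : Fin P.nT),
      (op, m, t) ∈ S → (op', m, t') ∈ S → op ≠ op' →
      ¬ (P.timeVal t ≤ P.timeVal t' ∧ P.timeVal t' < P.timeVal t + P.d op.1 op.2 m))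

/-- The makespan `C(S) = max{t + d_{j,o,m} : (O_{j,o}, M_m, T_t) ∈ S}`. -/
def makespan (S : P.Schedule) : ℕ := S.sup fun a => P.timeVal a.2.2 + P.dur a

/-- The schedule encoded by a bit string `x ∈ {0,1}^N`, with respect to a bijective
enumeration `ι` of all assignments: the set of assignments whose bit is set. -/
def decode {N : ℕ} (ι : P.Assignment ≃ Fin N) (x : Fin N → Bool) : P.Schedule :=
  Finset.univ.filter fun a => x (ι a) = true

end FJSP

/-- The action of a permutation `π ∈ S_N` on bit strings:
`π(x) = (x_{π⁻¹(1)}, …, x_{π⁻¹(N)})`. -/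
def permBits {N : ℕ} (π : Equiv.Perm (Fin N)) (x : Fin N → Bool) : Fin N → Bool :=
  fun j => x (π.symm j)

/-!
Both schedules place every operation exactly once, so they are graphs of placements
`f g : Op → Machine × Time`, and a transposition of two bits moves a single operation.
Let `C` bound both makespans; since `2C < n_T`, the copy `l` of `f` delayed by `C` fits in
the horizon and lies entirely after every operation of `f` and of `g`. Mixing an early
placement (ending by `C`) with the late one `l` stays feasible as long as the delayed
operations form an up-set of each job's operation order. So we move the operations from `f`
to `l` one at a time, the last operations of each job first, and then from `l` to `g`, the
first operations of each job first.
-/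

open Relation

theorem List.exists_foldl_of_reflTransGen {X G : Type*} {act : G → X → X} {gen : G → Prop}
    {good : X → Prop} {x y : X} (hx : good x)
    (h : ReflTransGen (fun u v => (∃ τ, gen τ ∧ act τ u = v) ∧ good v) x y) :
    ∃ L : List G, (∀ τ ∈ L, gen τ) ∧ L.foldl (fun s τ => act τ s) x = y ∧
      ∀ L₁, L₁ <+: L → good (L₁.foldl (fun s τ => act τ s) x) := by
  induction h with
  | refl => exact ⟨[], by simp, rfl, by simpa using hx⟩
  | tail _ hstep ih =>
    obtain ⟨L, hgen, hfold, hgood⟩ := ih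
    obtain ⟨⟨τ, hτ, rfl⟩, hv⟩ := hstep
    refine ⟨L ++ [τ], by simpa [or_imp, forall_and] using ⟨hgen, hτ⟩, by simp [hfold], ?_⟩
    intro L₁ hL₁
    rcases List.prefix_concat_iff.mp hL₁ with rfl | hL₁
    · simpa [hfold] using hv
    · exact hgood L₁ hL₁

section UpdateStep

variable {α β : Type*} [DecidableEq α]

def UpdateStep (good : (α → β) → Prop) (f g : α → β) : Prop :=
  (∃ a b, g = Function.update f a b) ∧ good g

variable [Fintype α] [PartialOrder α]

theorem Finset.exists_insert_isUpperSet {s : Finset α} (hs : IsUpperSet (s : Set α))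
    (hne : s ≠ Finset.univ) : ∃ a ∉ s, IsUpperSet ((insert a s : Finset α) : Set α) := by
  obtain ⟨a, ha, hmax⟩ := sᶜ.exists_maximal
    (by simpa [Finset.nonempty_iff_ne_empty, Finset.compl_eq_empty_iff] using hne)
  refine ⟨a, Finset.mem_compl.mp ha, ?_⟩
  rintro b c hbc hb
  simp only [Finset.coe_insert, Set.mem_insert_iff, Finset.mem_coe] at hb ⊢
  rcases hb with rfl | hb
  · by_contra! hc
    exact hc.1 (le_antisymm hbc (hmax (Finset.mem_compl.mpr hc.2) hbc)).symm
  · exact Or.inr (hs hbc hb)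

theorem reflTransGen_updateStep_of_isUpperSet {good : (α → β) → Prop} {p q : α → β}
    (hgood : ∀ s : Finset α, IsUpperSet (s : Set α) → good (s.piecewise q p)) :
    ReflTransGen (UpdateStep good) p q := by
  suffices h : ∀ s : Finset α, IsUpperSet (s : Set α) →
      ReflTransGen (UpdateStep good) (s.piecewise q p) q by
    simpa using h ∅ (by simpa using isUpperSet_empty)
  intro s hs
  induction hn : sᶜ.card generalizing s with
  | zero =>
    rw [Finset.card_eq_zero, Finset.compl_eq_empty_iff] at hn
    rw [hn, Finset.piecewise_univ]
  | succ n ih =>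
    obtain ⟨a, has, hup⟩ :=
      Finset.exists_insert_isUpperSet hs (by rintro rfl; simp at hn)
    refine .head ⟨⟨a, q a, Finset.piecewise_insert ..⟩, hgood _ hup⟩ (ih _ hup ?_)
    rw [Finset.compl_insert, Finset.card_erase_of_mem (Finset.mem_compl.mpr has), hn]
    rfl

theorem reflTransGen_updateStep_of_isLowerSet {good : (α → β) → Prop} {p q : α → β}
    (hgood : ∀ s : Finset α, IsLowerSet (s : Set α) → good (s.piecewise q p)) :
    ReflTransGen (UpdateStep good) p q :=
  reflTransGen_updateStep_of_isUpperSet (α := αᵒᵈ) fun s hs => hgood s hs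

end UpdateStep

namespace FJSP

section Placements

variable (P : FJSP)

def endTime (a : P.Assignment) : ℕ := P.timeVal a.2.2 + P.dur a

/-- `<` on `Op` is the disjoint-sum order of `Σ j, Fin (p j)`:
`⟨j, o⟩ < ⟨j', o'⟩` iff `j = j'` and `o < o'`. -/
def Compatible (a b : P.Assignment) : Prop :=
  (a.1 < b.1 → P.endTime a ≤ P.timeVal b.2.2) ∧
  (a.1 ≠ b.1 → a.2.1 = b.2.1 →
    ¬ (P.timeVal a.2.2 ≤ P.timeVal b.2.2 ∧ P.timeVal b.2.2 < P.endTime a))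

def graph (f : P.Op → Fin P.nM × Fin P.nT) : P.Schedule :=
  Finset.univ.image fun op => (op, f op)

variable {P}

theorem mem_graph {f : P.Op → Fin P.nM × Fin P.nT} {a : P.Assignment} :
    a ∈ P.graph f ↔ f a.1 = a.2 := by
  simp only [graph, Finset.mem_image, Finset.mem_univ, true_and]
  constructor
  · rintro ⟨op, rfl⟩
    rfl
  · intro h
    exact ⟨a.1, by rw [h]⟩

theorem mk_mem_graph (f : P.Op → Fin P.nM × Fin P.nT) (op : P.Op) : (op, f op) ∈ P.graph f :=
  mem_graph.2 rfl

theorem feasible_graph_iff {f : P.Op → Fin P.nM × Fin P.nT} :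
    P.Feasible (P.graph f) ↔
      (∀ op, (f op).1 ∈ P.allowed op.1 op.2) ∧ ∀ op op', P.Compatible (op, f op) (op', f op') := by
  constructor
  · rintro ⟨-, hallowed, horder, hmachine⟩
    refine ⟨fun op => hallowed _ (mk_mem_graph f op), fun op op' => ⟨?_, fun hne hm => ?_⟩⟩
    · rintro ⟨j, o, o', hlt⟩
      exact horder j o o' _ _ _ _ (mk_mem_graph f _) (mk_mem_graph f _) hlt
    · exact hmachine op op' (f op).1 (f op).2 (f op').2 (mk_mem_graph f op)
        (mem_graph.2 (by rw [hm])) hne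
  · rintro ⟨hallowed, hcompat⟩
    refine ⟨fun op => ⟨f op, mk_mem_graph f op, fun mt h => (mem_graph.1 h).symm⟩, ?_, ?_, ?_⟩
    · rintro ⟨op, mt⟩ h
      obtain rfl : f op = mt := mem_graph.1 h
      exact hallowed op
    · intro j o o' m m' t t' h h' hlt
      have hc := (hcompat ⟨j, o⟩ ⟨j, o'⟩).1 (Sigma.mk_lt_mk_iff.2 hlt)
      rwa [mem_graph.1 h, mem_graph.1 h'] at hc
    · intro op op' m t t' h h' hne
      have hc := (hcompat op op').2 hne
      rw [mem_graph.1 h, mem_graph.1 h'] at hc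
      exact hc rfl

theorem exists_eq_graph {S : P.Schedule} (hS : P.Feasible S) :
    ∃ f : P.Op → Fin P.nM × Fin P.nT, S = P.graph f := by
  choose f hf using fun op => (hS.1 op).exists
  refine ⟨f, Finset.ext fun ⟨op, mt⟩ => ⟨fun h => mem_graph.2 ((hS.1 op).unique (hf op) h), ?_⟩⟩
  intro h
  obtain rfl : f op = mt := mem_graph.1 h
  exact hf op

theorem endTime_le_makespan {S : P.Schedule} {a : P.Assignment} (ha : a ∈ S) :
    P.endTime a ≤ P.makespan S :=
  Finset.le_sup (f := P.endTime) ha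

theorem Compatible.shift {op op' : P.Op} {m m' : Fin P.nM} {t t' u u' : Fin P.nT} {c : ℕ}
    (h : P.Compatible (op, m, t) (op', m', t')) (hu : P.timeVal u = P.timeVal t + c)
    (hu' : P.timeVal u' = P.timeVal t' + c) : P.Compatible (op, m, u) (op', m', u') := by
  obtain ⟨horder, hmachine⟩ := h
  simp only [Compatible, endTime, dur] at horder hmachine ⊢
  refine ⟨fun hlt => ?_, fun hne hm => ?_⟩
  · have := horder hlt
    omega
  · have := hmachine hne hm
    omega

theorem compatible_of_endTime_le {a b : P.Assignment} {C : ℕ} (ha : P.endTime a ≤ C)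
    (hb : C < P.timeVal b.2.2) : P.Compatible a b :=
  ⟨fun _ => by omega, fun _ _ => by omega⟩

theorem compatible_of_lt_timeVal {a b : P.Assignment} {C : ℕ} (hb : P.endTime b ≤ C)
    (ha : C < P.timeVal a.2.2) (hlt : ¬ a.1 < b.1) : P.Compatible a b := by
  have : P.timeVal b.2.2 ≤ P.endTime b := Nat.le_add_right _ _
  exact ⟨fun h => absurd h hlt, fun _ _ => by omega⟩

theorem feasible_graph_piecewise {e l : P.Op → Fin P.nM × Fin P.nT} {C : ℕ}
    (he : P.Feasible (P.graph e)) (hl : P.Feasible (P.graph l))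
    (he_end : ∀ op, P.endTime (op, e op) ≤ C) (hl_start : ∀ op, C < P.timeVal (l op).2)
    {s : Finset P.Op} (hs : IsUpperSet (s : Set P.Op)) :
    P.Feasible (P.graph (s.piecewise l e)) := by
  rw [feasible_graph_iff] at he hl ⊢
  refine ⟨fun op => ?_, fun op op' => ?_⟩
  · by_cases h : op ∈ s
    · simpa [h] using hl.1 op
    · simpa [h] using he.1 op
  · by_cases h : op ∈ s <;> by_cases h' : op' ∈ s <;>
      simp only [Finset.piecewise_eq_of_mem, Finset.piecewise_eq_of_notMem, h, h',
        not_false_eq_true]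
    · exact hl.2 op op'
    · exact compatible_of_lt_timeVal (he_end op') (hl_start op) fun hlt => h' (hs hlt.le h)
    · exact compatible_of_endTime_le (he_end op) (hl_start op')
    · exact he.2 op op'

theorem exists_feasible_graph_shift {f : P.Op → Fin P.nM × Fin P.nT}
    (hf : P.Feasible (P.graph f)) {c : ℕ} (hc : ∀ op, P.timeVal (f op).2 + c ≤ P.nT) :
    ∃ l : P.Op → Fin P.nM × Fin P.nT, P.Feasible (P.graph l) ∧
      ∀ op, P.timeVal (l op).2 = P.timeVal (f op).2 + c := by
  have hlt : ∀ op, (f op).2.val + c < P.nT := fun op => by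
    have := hc op
    simp only [timeVal] at this
    omega
  have htime : ∀ op, P.timeVal ⟨(f op).2.val + c, hlt op⟩ = P.timeVal (f op).2 + c := fun op => by
    simp only [timeVal]
    omega
  refine ⟨fun op => ((f op).1, ⟨(f op).2.val + c, hlt op⟩), ?_, htime⟩
  rw [feasible_graph_iff] at hf ⊢
  exact ⟨hf.1, fun op op' => (hf.2 op op').shift (htime op) (htime op')⟩

theorem reflTransGen_updateStep_of_two_mul_makespan_lt {f g : P.Op → Fin P.nM × Fin P.nT}
    (hf : P.Feasible (P.graph f)) (hg : P.Feasible (P.graph g))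
    (hC : 2 * max (P.makespan (P.graph f)) (P.makespan (P.graph g)) < P.nT) :
    ReflTransGen (UpdateStep fun h => P.Feasible (P.graph h)) f g := by
  set C := max (P.makespan (P.graph f)) (P.makespan (P.graph g))
  have hf_end : ∀ op, P.endTime (op, f op) ≤ C := fun op =>
    (endTime_le_makespan (mk_mem_graph f op)).trans (le_max_left _ _)
  have hg_end : ∀ op, P.endTime (op, g op) ≤ C := fun op =>
    (endTime_le_makespan (mk_mem_graph g op)).trans (le_max_right _ _)
  obtain ⟨l, hl, hl_time⟩ := exists_feasible_graph_shift hf (c := C) fun op => by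
    have := hf_end op
    simp only [endTime] at this
    omega
  have hl_start : ∀ op, C < P.timeVal (l op).2 := fun op => by
    rw [hl_time]
    simp only [timeVal]
    omega
  refine .trans (reflTransGen_updateStep_of_isUpperSet fun s hs =>
    feasible_graph_piecewise hf hl hf_end hl_start hs) (reflTransGen_updateStep_of_isLowerSet
      fun s hs => ?_)
  rw [← Finset.piecewise_compl]
  exact feasible_graph_piecewise hg hl hg_end hl_start (by simpa using hs.compl)

end Placements

section Encoding

variable {P : FJSP} {N : ℕ}

variable (P) in
def encode (ι : P.Assignment ≃ Fin N) (S : P.Schedule) : Fin N → Bool :=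
  fun i => decide (ι.symm i ∈ S)

theorem decode_encode (ι : P.Assignment ≃ Fin N) (S : P.Schedule) :
    P.decode ι (P.encode ι S) = S := by
  ext a
  simp [decode, encode]

theorem encode_decode (ι : P.Assignment ≃ Fin N) (x : Fin N → Bool) :
    P.encode ι (P.decode ι x) = x := by
  funext i
  simp [decode, encode]

theorem permBits_swap_encode_graph (ι : P.Assignment ≃ Fin N)
    {f : P.Op → Fin P.nM × Fin P.nT} {op : P.Op} {mt : Fin P.nM × Fin P.nT} (hne : f op ≠ mt) :
    permBits (Equiv.swap (ι (op, f op)) (ι (op, mt))) (P.encode ι (P.graph f)) =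
      P.encode ι (P.graph (Function.update f op mt)) := by
  funext i
  obtain ⟨a, rfl⟩ := ι.surjective i
  simp only [permBits, Equiv.symm_swap, ι.injective.swap_apply, encode, Equiv.symm_apply_apply,
    decide_eq_decide, mem_graph]
  rcases eq_or_ne a (op, f op) with rfl | hau
  · simp [hne, Ne.symm hne]
  rcases eq_or_ne a (op, mt) with rfl | hav
  · simp
  rw [Equiv.swap_apply_of_ne_of_ne hau hav]
  rcases eq_or_ne a.1 op with hop | hop
  · obtain ⟨op, t⟩ := a
    obtain rfl : op = _ := hop
    simp only [Function.update_self]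
    exact ⟨fun h => absurd (by rw [h]) hau, fun h => absurd (by rw [h]) hav⟩
  · rw [Function.update_of_ne hop]

theorem reflTransGen_encode_graph_of_updateStep (ι : P.Assignment ≃ Fin N)
    {f g : P.Op → Fin P.nM × Fin P.nT} (h : UpdateStep (fun h => P.Feasible (P.graph h)) f g) :
    ReflTransGen (fun u v => (∃ τ : Equiv.Perm (Fin N), τ.IsSwap ∧ permBits τ u = v) ∧
        P.Feasible (P.decode ι v))
      (P.encode ι (P.graph f)) (P.encode ι (P.graph g)) := by
  obtain ⟨⟨op, mt, rfl⟩, hg⟩ := h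
  by_cases hne : f op = mt
  · rw [← hne, Function.update_eq_self]
  · refine .single ⟨⟨_, ⟨_, _, ι.injective.ne fun h => hne ?_, rfl⟩,
      permBits_swap_encode_graph ι hne⟩, by rwa [decode_encode]⟩
    exact (Prod.mk.inj h).2

end Encoding

end FJSP

/-- Transposition connectivity: if `x, y` encode feasible schedules whose makespans
satisfy `max(C(x), C(y)) < n_T / 2`, then there is a finite sequence of transpositions
`τ_1, …, τ_k` with `(τ_k ∘ ⋯ ∘ τ_1)(x) = y` such that every intermediate bit string
`(τ_l ∘ ⋯ ∘ τ_1)(x)` encodes a feasible schedule. -/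
theorem stmt0 (P : FJSP) {N : ℕ} (ι : P.Assignment ≃ Fin N) (x y : Fin N → Bool)
    (hx : P.Feasible (P.decode ι x)) (hy : P.Feasible (P.decode ι y))
    (hC : 2 * max (P.makespan (P.decode ι x)) (P.makespan (P.decode ι y)) < P.nT) :
    ∃ L : List (Equiv.Perm (Fin N)),
      (∀ τ ∈ L, τ.IsSwap) ∧
      L.foldl (fun s τ => permBits τ s) x = y ∧
      ∀ L₁, L₁ <+: L → P.Feasible (P.decode ι (L₁.foldl (fun s τ => permBits τ s) x)) := by
  obtain ⟨f, hfx⟩ := FJSP.exists_eq_graph hx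
  obtain ⟨g, hgy⟩ := FJSP.exists_eq_graph hy
  have hpath := FJSP.reflTransGen_updateStep_of_two_mul_makespan_lt (hfx ▸ hx) (hgy ▸ hy)
    (hfx ▸ hgy ▸ hC)
  have hbits : ReflTransGen _ (P.encode ι (P.graph f)) (P.encode ι (P.graph g)) :=
    hpath.lift' (P.encode ι ∘ P.graph) fun _ _ => FJSP.reflTransGen_encode_graph_of_updateStep ι
  rw [← hfx, ← hgy, FJSP.encode_decode, FJSP.encode_decode] at hbits
  exact List.exists_foldl_of_reflTransGen (good := fun v => P.Feasible (P.decode ι v)) hx hbits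
end

section
/- Preservation of feasibility: for every feasible bit string x ∈ F, every β ∈ ℝ, and every finite sequence of involutions π_1, …, π_n ∈ S_N, the state B(β)(|x⟩_x ⊗ |0⟩_y ⊗ |0⟩_{z_1} ⊗ ⋯ ⊗ |0⟩_{z_n} ⊗ |0⟩_c), where B(β) = B_{π_n}(β)⋯B_{π_1}(β)·A, lies in the subspace 𝓕 ⊗ H_aux, where 𝓕 = span{|w⟩ : w ∈ F} ⊆ H_x and H_aux = H_y ⊗ ℂ²_{z_1} ⊗ ⋯ ⊗ ℂ²_{z_n} ⊗ ℂ²_c. -/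
/-- Hamming weight of a bit string. -/
def hammingWeight {N : ℕ} (x : Fin N → Bool) : ℕ :=
  (Finset.univ.filter fun j => x j = true).card

/-- The control predicate `χ_π(x) = ⋀_j [¬x_j ∨ ⋀_{l ∈ nbhd(π(j))} ¬x_{π⁻¹(l)}]`. -/
def chi {N : ℕ} (G : SimpleGraph (Fin N)) [DecidableRel G.Adj] (π : Equiv.Perm (Fin N))
    (x : Fin N → Bool) : Bool :=
  decide (∀ j : Fin N, ¬ x j = true ∨ ∀ l : Fin N, G.Adj (π j) l → ¬ x (π.symm l) = true)

/-- The feasible set `F`: no two adjacent vertices are both marked, and the Hamming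
weight equals `k`. -/
def Fset {N : ℕ} (G : SimpleGraph (Fin N)) (k : ℕ) : Set (Fin N → Bool) :=
  {x | (∀ j l : Fin N, G.Adj j l → ¬ (x j = true ∧ x l = true)) ∧ hammingWeight x = k}

/-- Basis index set of `H = H_x ⊗ H_y ⊗ ℂ²_{z_1} ⊗ ⋯ ⊗ ℂ²_{z_n} ⊗ ℂ²_c`: a basis vector
`|w⟩_x|y⟩_y|z_1⟩⋯|z_n⟩|c⟩_c` corresponds to the tuple `(w, y, z, c)`. -/
abbrev MixIdx (N n : ℕ) := (Fin N → Bool) × (Fin N → Bool) × (Fin n → Bool) × Bool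

/-- The Hilbert space `H = H_x ⊗ H_y ⊗ ℂ²_{z_1} ⊗ ⋯ ⊗ ℂ²_{z_n} ⊗ ℂ²_c`. -/
abbrev Hmix (N n : ℕ) := EuclideanSpace ℂ (MixIdx N n)

/-- The linear extension of the basis map `|p⟩ ↦ |g(p)⟩`. -/
noncomputable def basisExtend {ι : Type*} [Fintype ι] [DecidableEq ι] (g : ι → ι) :
    EuclideanSpace ℂ ι →ₗ[ℂ] EuclideanSpace ℂ ι :=
  Matrix.toEuclideanLin (Matrix.of fun q p => if g p = q then (1 : ℂ) else 0)

/-- The basis state `|x⟩`. -/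
noncomputable def ket {ι : Type*} [Fintype ι] [DecidableEq ι] (x : ι) : EuclideanSpace ℂ ι :=
  EuclideanSpace.single x 1

/-- The copy unitary `A`: on basis states, `|w⟩_x|y⟩_y ↦ |w⟩_x|y ⊕ w⟩_y` (bitwise XOR),
acting trivially on the `z` and `c` registers. -/
noncomputable def Aop (N n : ℕ) : Hmix N n →ₗ[ℂ] Hmix N n :=
  basisExtend fun p => (p.1, fun j => xor (p.2.1 j) (p.1 j), p.2.2.1, p.2.2.2)

/-- The operator `V_i`: the linear extension of the basis map sending
`|w⟩_x|y⟩_y|z⟩_{z_i}|c⟩_c ↦ |π_i(w)⟩_x|y⟩_y|1−z⟩_{z_i}|1−c⟩_c` when `χ_{π_i}(y) = 1` and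
`z_i = c`, and fixing the basis vector otherwise. -/
noncomputable def Vop {N n : ℕ} (G : SimpleGraph (Fin N)) [DecidableRel G.Adj]
    (π : Fin n → Equiv.Perm (Fin N)) (i : Fin n) : Hmix N n →ₗ[ℂ] Hmix N n :=
  basisExtend fun p =>
    if chi G (π i) p.2.1 = true ∧ p.2.2.1 i = p.2.2.2 then
      (permBits (π i) p.1, p.2.1, Function.update p.2.2.1 i (!p.2.2.1 i), !p.2.2.2)
    else p

/-- The partial graph-controlled permutation mixer `B_{π_i}(β) = cos β·𝟙 − i sin β·V_i`. -/
noncomputable def Bop {N n : ℕ} (G : SimpleGraph (Fin N)) [DecidableRel G.Adj]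
    (π : Fin n → Equiv.Perm (Fin N)) (i : Fin n) (β : ℝ) : Hmix N n →ₗ[ℂ] Hmix N n :=
  (Real.cos β : ℂ) • (1 : Module.End ℂ (Hmix N n)) -
    (Complex.I * (Real.sin β : ℂ)) • Vop G π i

/-- The mixer `B(β) = B_{π_n}(β) ⋯ B_{π_1}(β) · A`. -/
noncomputable def mixer {N n : ℕ} (G : SimpleGraph (Fin N)) [DecidableRel G.Adj]
    (π : Fin n → Equiv.Perm (Fin N)) (β : ℝ) : Hmix N n →ₗ[ℂ] Hmix N n :=
  (List.ofFn fun i : Fin n => Bop G π i β).reverse.prod * Aop N n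

/-!
After `A` the state is `|x⟩|x⟩|0⟩|0⟩`, and no `V_i` touches the `y` register again. Each `V_i`
fires only when `z_i = c` and then flips both, so the only basis states ever reached are
`|x⟩|x⟩|0⟩|0⟩` and, for each `i` with `χ_{π_i}(x)`, `|π_i x⟩|x⟩|e_i⟩|1⟩`: from the latter every
`V_j` with `j ≠ i` is blocked by `z_j ≠ c`, and `V_i` leads back to the start because `π_i` is an
involution. The span of these states is therefore invariant under every `B_{π_i}(β)`, and
`χ_{π_i}(x)` is what keeps `π_i x` independent in `G`, while `π_i` preserves the weight.
-/

section PermBits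

variable {N : ℕ}

lemma permBits_mul (σ τ : Equiv.Perm (Fin N)) (x : Fin N → Bool) :
    permBits (σ * τ) x = permBits σ (permBits τ x) :=
  rfl

lemma permBits_one (x : Fin N → Bool) : permBits 1 x = x :=
  rfl

lemma permBits_permBits_of_sq_eq_one {π : Equiv.Perm (Fin N)} (hπ : π ^ 2 = 1)
    (x : Fin N → Bool) : permBits π (permBits π x) = x := by
  rw [← permBits_mul, ← sq, hπ, permBits_one]

lemma hammingWeight_permBits (π : Equiv.Perm (Fin N)) (x : Fin N → Bool) :
    hammingWeight (permBits π x) = hammingWeight x :=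
  Finset.card_equiv π.symm fun _ => by
    simp only [Finset.mem_filter_univ]
    rfl

lemma permBits_mem_Fset_of_chi {k : ℕ} (G : SimpleGraph (Fin N)) [DecidableRel G.Adj]
    {π : Equiv.Perm (Fin N)} {x : Fin N → Bool} (hx : x ∈ Fset G k)
    (hchi : chi G π x = true) : permBits π x ∈ Fset G k := by
  have hc := of_decide_eq_true hchi
  refine ⟨fun a b hab ⟨ha, hb⟩ => ?_, (hammingWeight_permBits π x).trans hx.2⟩
  rcases hc (π.symm a) with h | h
  · exact h ha
  · exact h b (by simpa using hab) hb

end PermBits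

section BasisExtend

variable {ι : Type*} [Fintype ι] [DecidableEq ι]

lemma basisExtend_ket (g : ι → ι) (p : ι) : basisExtend g (ket p) = ket (g p) := by
  ext q
  simp [basisExtend, ket, Matrix.toLpLin_apply, PiLp.single_apply, eq_comm]

lemma span_ket_mem_invtSubmodule_basisExtend {g : ι → ι} {P : Set ι} (hg : Set.MapsTo g P P) :
    Submodule.span ℂ (ket '' P) ∈ Module.End.invtSubmodule (basisExtend g) := by
  rw [Module.End.mem_invtSubmodule_iff_map_le, Submodule.map_span, Submodule.span_le,
    ← Set.image_comp]
  rintro _ ⟨p, hp, rfl⟩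
  exact Submodule.subset_span ⟨g p, hg hp, (basisExtend_ket g p).symm⟩

end BasisExtend

lemma Module.End.list_prod_mem_invtSubmodule {R M : Type*} [Semiring R] [AddCommMonoid M]
    [Module R M] {p : Submodule R M} {l : List (Module.End R M)}
    (h : ∀ f ∈ l, p ∈ f.invtSubmodule) : p ∈ l.prod.invtSubmodule :=
  List.prod_induction (fun f : Module.End R M => p ∈ f.invtSubmodule)
    (fun _ _ hf hg _ hv => hf (hg hv))
    (fun _ hv => hv) h

section Mixer

variable {N n : ℕ} (G : SimpleGraph (Fin N)) [DecidableRel G.Adj]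
  (π : Fin n → Equiv.Perm (Fin N))

def controlledStep (i : Fin n) (p : MixIdx N n) : MixIdx N n :=
  if chi G (π i) p.2.1 = true ∧ p.2.2.1 i = p.2.2.2 then
    (permBits (π i) p.1, p.2.1, Function.update p.2.2.1 i (!p.2.2.1 i), !p.2.2.2)
  else p

lemma Vop_eq_basisExtend (i : Fin n) : Vop G π i = basisExtend (controlledStep G π i) :=
  rfl

def reachableIdx (x : Fin N → Bool) : Set (MixIdx N n) :=
  {p | p = (x, x, fun _ => false, false) ∨
    ∃ i, chi G (π i) x = true ∧
      p = (permBits (π i) x, x, Function.update (fun _ => false) i true, true)}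

lemma mapsTo_controlledStep_reachableIdx (hπ : ∀ i, π i ^ 2 = 1) (x : Fin N → Bool)
    (i : Fin n) : Set.MapsTo (controlledStep G π i) (reachableIdx G π x) (reachableIdx G π x) := by
  rintro p (rfl | ⟨j, hj, rfl⟩)
  · by_cases hi : chi G (π i) x = true
    · exact .inr ⟨i, hi, by simp [controlledStep, hi]⟩
    · exact .inl (by simp [controlledStep, hi])
  · by_cases hij : i = j
    · subst hij
      left
      simp [controlledStep, hj, permBits_permBits_of_sq_eq_one (hπ i)]
    · right
      exact ⟨j, hj, by simp [controlledStep, Function.update_of_ne hij]⟩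

lemma fst_mem_Fset_of_mem_reachableIdx {k : ℕ} {x : Fin N → Bool} (hx : x ∈ Fset G k)
    {p : MixIdx N n} (hp : p ∈ reachableIdx G π x) : p.1 ∈ Fset G k := by
  rcases hp with rfl | ⟨i, hi, rfl⟩
  · exact hx
  · exact permBits_mem_Fset_of_chi G hx hi

lemma span_reachableIdx_mem_invtSubmodule_Bop (hπ : ∀ i, π i ^ 2 = 1) (x : Fin N → Bool)
    (i : Fin n) (β : ℝ) :
    Submodule.span ℂ (ket '' reachableIdx G π x) ∈ Module.End.invtSubmodule (Bop G π i β) := by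
  have hV :=
    span_ket_mem_invtSubmodule_basisExtend (mapsTo_controlledStep_reachableIdx G π hπ x i)
  rw [← Vop_eq_basisExtend] at hV
  intro v hv
  exact Submodule.sub_mem _ (Submodule.smul_mem _ _ hv) (Submodule.smul_mem _ _ (hV hv))

lemma Aop_ket (x y : Fin N → Bool) (z : Fin n → Bool) (c : Bool) :
    Aop N n (ket (x, y, z, c)) = ket (x, fun j => xor (y j) (x j), z, c) :=
  basisExtend_ket _ _

end Mixer

/-- Preservation of feasibility: for every `x ∈ F`, every `β`, and every finite sequence
of involutions `π_1, …, π_n`, the state `B(β)(|x⟩_x ⊗ |0⟩_y ⊗ |0⟩_{z_1} ⊗ ⋯ ⊗ |0⟩_{z_n} ⊗ |0⟩_c)`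
lies in `𝓕 ⊗ H_aux = span{|w⟩ ⊗ |φ⟩ : w ∈ F, φ an auxiliary basis state}`. -/
theorem stmt1 {N k n : ℕ} (G : SimpleGraph (Fin N)) [DecidableRel G.Adj]
    (π : Fin n → Equiv.Perm (Fin N)) (hπ : ∀ i, π i ^ 2 = 1)
    (x : Fin N → Bool) (hx : x ∈ Fset G k) (β : ℝ) :
    mixer G π β (ket (x, (fun _ => false), (fun _ => false), false)) ∈
      Submodule.span ℂ
        {v : Hmix N n |
          ∃ w ∈ Fset G k, ∃ (y : Fin N → Bool) (z : Fin n → Bool) (c : Bool),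
            v = ket (w, y, z, c)} := by
  have hinv : Submodule.span ℂ (ket '' reachableIdx G π x) ∈
      Module.End.invtSubmodule (List.ofFn fun i => Bop G π i β).reverse.prod := by
    refine Module.End.list_prod_mem_invtSubmodule fun f hf => ?_
    obtain ⟨i, rfl⟩ := List.mem_ofFn.mp (List.mem_reverse.mp hf)
    exact span_reachableIdx_mem_invtSubmodule_Bop G π hπ x i β
  have hstart : Aop N n (ket (x, fun _ => false, fun _ => false, false)) ∈
      Submodule.span ℂ (ket '' reachableIdx G π x) := by
    rw [Aop_ket]
    exact Submodule.subset_span ⟨_, .inl (by simp), rfl⟩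
  refine Submodule.span_mono ?_ (hinv hstart)
  rintro _ ⟨p, hp, rfl⟩
  exact ⟨p.1, fst_mem_Fset_of_mem_reachableIdx G π hx hp, p.2.1, p.2.2.1, p.2.2.2, rfl⟩
end

section
/- Single-layer feasibility of the controlled fractional permutation: for every permutation π ∈ S_N, every β ∈ ℝ, and every feasible bit string x ∈ F, the state Λ_{χ_π}(U_π(β))(|x⟩ ⊗ |x⟩) lies in 𝓕 ⊗ H_N, where 𝓕 = span{|w⟩ : w ∈ F}. Explicitly, it equals (cos(β)|x⟩ − i·sin(β)|π(x)⟩) ⊗ |x⟩ with π(x) ∈ F if χ_π(x) = 1, and equals |x⟩ ⊗ |x⟩ if χ_π(x) = 0. -/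
/-- The Hilbert space `H_N` with orthonormal basis `{|x⟩ : x ∈ {0,1}^N}`. -/
abbrev HN (N : ℕ) := EuclideanSpace ℂ (Fin N → Bool)

/-- The permutation operator `U_π`, the linear extension of `U_π|x⟩ = |π(x)⟩`. -/
noncomputable def permU {N : ℕ} (π : Equiv.Perm (Fin N)) : HN N →ₗ[ℂ] HN N :=
  basisExtend (permBits π)

/-- The fractional permutation operator `U_π(β) = cos β·𝟙 − i sin β·U_π`. -/
noncomputable def permUbeta {N : ℕ} (π : Equiv.Perm (Fin N)) (β : ℝ) : HN N →ₗ[ℂ] HN N :=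
  (Real.cos β : ℂ) • (1 : Module.End ℂ (HN N)) - (Complex.I * (Real.sin β : ℂ)) • permU π

/-- The χ-controlled operator `Λ_χ(U)` on `H_N ⊗ H_N` (modelled as the Euclidean
space indexed by `{0,1}^N × {0,1}^N`). -/
noncomputable def controlled {N : ℕ} (χ : (Fin N → Bool) → Bool) (U : HN N →ₗ[ℂ] HN N) :
    EuclideanSpace ℂ ((Fin N → Bool) × (Fin N → Bool)) →ₗ[ℂ]
      EuclideanSpace ℂ ((Fin N → Bool) × (Fin N → Bool)) :=
  Matrix.toEuclideanLin <| Matrix.of fun p q =>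
    if p.2 = q.2 then
      (if χ q.2 = true then Matrix.toEuclideanLin.symm U p.1 q.1
       else if p.1 = q.1 then 1 else 0)
    else 0


/-!
On a product basis state `|x⟩ ⊗ |x⟩` the controlled gate acts as `U_π(β)` or as the identity
on the first factor according to `χ_π(x)`, and `U_π(β)|x⟩ = cos β |x⟩ − i sin β |π(x)⟩`. So
the only new basis state that can appear is `|π(x)⟩ ⊗ |x⟩`, and only when `χ_π(x) = 1`.
Permuting bits preserves the Hamming weight, and `χ_π(x) = 1` says precisely that no edge of
`G` joins two marked vertices of `π(x)`; hence `π(x) ∈ F`.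
-/

section Ket

variable {ι : Type*} [Fintype ι] [DecidableEq ι]

lemma ket_apply (x p : ι) : ket x p = if p = x then 1 else 0 :=
  PiLp.single_apply 2 ℂ x 1 p

lemma toEuclideanLin_apply_ket (M : Matrix ι ι ℂ) (q p : ι) :
    Matrix.toEuclideanLin M (ket q) p = M p q := by
  simp [ket, Matrix.toLpLin_apply, Matrix.mulVec_single]

lemma toEuclideanLin_symm_apply (U : EuclideanSpace ℂ ι →ₗ[ℂ] EuclideanSpace ℂ ι) (p q : ι) :
    Matrix.toEuclideanLin.symm U p q = U (ket q) p := by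
  conv_rhs => rw [← Matrix.toEuclideanLin.apply_symm_apply U]
  exact (toEuclideanLin_apply_ket _ q p).symm

end Ket

section Tensor

variable {α : Type*} [Fintype α] [DecidableEq α]

/-- `v ↦ v ⊗ |y⟩`. -/
noncomputable def tensorKet (y : α) :
    EuclideanSpace ℂ α →ₗ[ℂ] EuclideanSpace ℂ (α × α) where
  toFun v := WithLp.toLp 2 fun p => if p.2 = y then v p.1 else 0
  map_add' u v := by ext p; by_cases h : p.2 = y <;> simp [h]
  map_smul' c v := by ext p; by_cases h : p.2 = y <;> simp [h]

lemma tensorKet_ket (x y : α) : tensorKet y (ket x) = ket (x, y) := by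
  ext p
  simp only [tensorKet, LinearMap.coe_mk, AddHom.coe_mk, ket_apply, Prod.ext_iff]
  split_ifs <;> tauto

variable {N : ℕ} {χ : (Fin N → Bool) → Bool} {U : HN N →ₗ[ℂ] HN N} (x : Fin N → Bool)
  {y : Fin N → Bool}

lemma controlled_ket_apply (p : (Fin N → Bool) × (Fin N → Bool)) :
    controlled χ U (ket (x, y)) p =
      if p.2 = y then (if χ y = true then U (ket x) p.1 else ket x p.1) else 0 := by
  rw [controlled, toEuclideanLin_apply_ket, Matrix.of_apply, toEuclideanLin_symm_apply,
    ket_apply]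

lemma controlled_ket_of_true (hχ : χ y = true) :
    controlled χ U (ket (x, y)) = tensorKet y (U (ket x)) := by
  ext p
  rw [controlled_ket_apply, if_pos hχ]
  rfl

lemma controlled_ket_of_false (hχ : χ y = false) :
    controlled χ U (ket (x, y)) = ket (x, y) := by
  conv_rhs => rw [← tensorKet_ket]
  ext p
  rw [controlled_ket_apply, hχ]
  rfl

end Tensor

section Permutation

variable {N : ℕ}

lemma permUbeta_ket (π : Equiv.Perm (Fin N)) (β : ℝ) (x : Fin N → Bool) :
    permUbeta π β (ket x) =
      (Real.cos β : ℂ) • ket x - (Complex.I * (Real.sin β : ℂ)) • ket (permBits π x) := by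
  simp [permUbeta, permU, basisExtend_ket]

lemma permBits_mem_Fset {k : ℕ} {G : SimpleGraph (Fin N)} [DecidableRel G.Adj]
    {π : Equiv.Perm (Fin N)} {x : Fin N → Bool} (hx : x ∈ Fset G k)
    (hχ : chi G π x = true) : permBits π x ∈ Fset G k := by
  refine ⟨fun a b hab ⟨ha, hb⟩ => ?_, (hammingWeight_permBits π x).trans hx.2⟩
  rcases of_decide_eq_true hχ (π.symm a) with h | h
  · exact h ha
  · exact h b (by simpa using hab) hb

end Permutation

/-- Single-layer feasibility: for `x ∈ F`, the state `Λ_{χ_π}(U_π(β))(|x⟩ ⊗ |x⟩)` lies in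
`𝓕 ⊗ H_N`; explicitly it equals `(cos β|x⟩ − i sin β|π(x)⟩) ⊗ |x⟩` with `π(x) ∈ F` if
`χ_π(x) = 1`, and equals `|x⟩ ⊗ |x⟩` if `χ_π(x) = 0`. -/
theorem stmt9 {N k : ℕ} (G : SimpleGraph (Fin N)) [DecidableRel G.Adj]
    (π : Equiv.Perm (Fin N)) (β : ℝ) (x : Fin N → Bool) (hx : x ∈ Fset G k) :
    controlled (chi G π) (permUbeta π β) (ket (x, x)) ∈
        Submodule.span ℂ
          {v | ∃ w ∈ Fset G k, ∃ y : Fin N → Bool, v = ket (w, y)} ∧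
      (chi G π x = true →
        permBits π x ∈ Fset G k ∧
          controlled (chi G π) (permUbeta π β) (ket (x, x)) =
            (Real.cos β : ℂ) • ket (x, x) -
              (Complex.I * (Real.sin β : ℂ)) • ket (permBits π x, x)) ∧
      (chi G π x = false →
        controlled (chi G π) (permUbeta π β) (ket (x, x)) = ket (x, x)) := by
  have hspan : ∀ w ∈ Fset G k, ket (w, x) ∈ Submodule.span ℂ
      {v | ∃ w ∈ Fset G k, ∃ y : Fin N → Bool, v = ket (w, y)} :=
    fun w hw => Submodule.subset_span ⟨w, hw, x, rfl⟩
  cases hχ : chi G π x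
  · rw [controlled_ket_of_false x hχ]
    exact ⟨hspan x hx, by simp, fun _ => rfl⟩
  · have heq : controlled (chi G π) (permUbeta π β) (ket (x, x)) =
        (Real.cos β : ℂ) • ket (x, x) - (Complex.I * (Real.sin β : ℂ)) • ket (permBits π x, x) := by
      rw [controlled_ket_of_true x hχ, permUbeta_ket, map_sub, map_smul, map_smul,
        tensorKet_ket, tensorKet_ket]
    have hπx := permBits_mem_Fset hx hχ
    refine ⟨?_, fun _ => ⟨hπx, heq⟩, by simp⟩
    rw [heq]
    exact sub_mem (Submodule.smul_mem _ _ (hspan x hx)) (Submodule.smul_mem _ _ (hspan _ hπx))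
end

section
/- Correspondence between feasible schedules and independent sets of the constraint graph: a bit string x ∈ {0,1}^N encodes a feasible FJSP schedule (x ∈ F) if and only if (i) every marked index of x lies in V (only allowed operation–machine–time assignments are marked), (ii) the set of marked indices is an independent set of the constraint graph G = (V, E), i.e., no two marked indices are joined by an edge, and (iii) the Hamming weight |x| equals the total number of operations k = |O|. -/
namespace FJSP

variable (P : FJSP)

/-- Conflict with the assignment constraint: two distinct assignments of the same
operation. -/
def conflictA (a a' : P.Assignment) : Prop := a ≠ a' ∧ a.1 = a'.1

/-- (One-sided) conflict with the order constraint: assignments of operations `o < o'`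
of the same job with `t + d_{j,o,m} > t'`. -/
def conflictO (a a' : P.Assignment) : Prop :=
  ∃ (j : Fin P.nJ) (o o' : Fin (P.p j)) (m m' : Fin P.nM) (t t' : Fin P.nT),
    a = ⟨⟨j, o⟩, m, t⟩ ∧ a' = ⟨⟨j, o'⟩, m', t'⟩ ∧ o < o' ∧
      P.timeVal t' < P.timeVal t + P.d j o m

/-- (One-sided) conflict with the machine constraint: assignments of distinct operations
to the same machine with `t' ∈ [t, t + d_{j,o,m})`. -/
def conflictM (a a' : P.Assignment) : Prop :=
  a.1 ≠ a'.1 ∧ a.2.1 = a'.2.1 ∧ P.timeVal a.2.2 ≤ P.timeVal a'.2.2 ∧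
    P.timeVal a'.2.2 < P.timeVal a.2.2 + P.dur a

/-- Two assignments are in conflict (i.e. joined by an edge of the constraint graph)
iff they conflict with the assignment, order, or machine constraint. -/
def conflict (a a' : P.Assignment) : Prop :=
  P.conflictA a a' ∨ P.conflictO a a' ∨ P.conflictO a' a ∨
    P.conflictM a a' ∨ P.conflictM a' a

/-- A vertex of the constraint graph: an assignment using an allowed machine. -/
def isVertex (a : P.Assignment) : Prop := a.2.1 ∈ P.allowed a.1.1 a.1.2

end FJSP

/-!
Each constraint of feasibility says precisely that no two scheduled assignments are joined by
the corresponding kind of edge, except for the existence half of the assignment constraint.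
Absence of assignment edges makes the projection of the schedule to its operations injective,
so that every operation is scheduled exactly when the schedule has `|O|` elements.
-/

theorem Finset.forall_existsUnique_mem_iff_injOn_fst {α β : Type*} [Fintype α]
    {S : Finset (α × β)} :
    (∀ a, ∃! b, (a, b) ∈ S) ↔ Set.InjOn Prod.fst (S : Set (α × β)) ∧ S.card = Fintype.card α := by
  classical
  constructor
  · intro h
    have hinj : Set.InjOn Prod.fst S := fun p hp q hq hpq => by
      obtain ⟨b, -, huniq⟩ := h p.1
      have hq' : (p.1, q.2) ∈ S := by rw [hpq]; exact hq
      exact Prod.ext hpq ((huniq p.2 hp).trans (huniq q.2 hq').symm)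
    refine ⟨hinj, ?_⟩
    have himage : S.image Prod.fst = Finset.univ :=
      Finset.eq_univ_of_forall fun a => by
        obtain ⟨b, hb, -⟩ := h a
        exact Finset.mem_image_of_mem Prod.fst hb
    rw [← Finset.card_image_of_injOn hinj, himage, Finset.card_univ]
  · rintro ⟨hinj, hcard⟩ a
    have himage : S.image Prod.fst = Finset.univ :=
      Finset.eq_univ_of_card _ (by rw [Finset.card_image_of_injOn hinj, hcard])
    obtain ⟨p, hp, rfl⟩ := Finset.mem_image.1 (himage ▸ Finset.mem_univ a)
    exact ⟨p.2, hp, fun b hb => congrArg Prod.snd (hinj (x₁ := (p.1, b)) hb hp rfl)⟩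

namespace FJSP

theorem card_op (P : FJSP) : Fintype.card P.Op = ∑ j, P.p j := by
  simp

variable {P : FJSP}

theorem injOn_fst_iff_forall_not_conflictA {S : P.Schedule} :
    Set.InjOn Prod.fst (S : Set P.Assignment) ↔ ∀ a ∈ S, ∀ a' ∈ S, ¬ P.conflictA a a' := by
  simp only [Set.InjOn, conflictA, Finset.mem_coe, not_and, not_imp_comm, not_not]

theorem order_constraint_iff_forall_not_conflictO {S : P.Schedule} :
    (∀ (j : Fin P.nJ) (o o' : Fin (P.p j)) (m m' : Fin P.nM) (t t' : Fin P.nT),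
      (⟨⟨j, o⟩, m, t⟩ : P.Assignment) ∈ S → (⟨⟨j, o'⟩, m', t'⟩ : P.Assignment) ∈ S →
      o < o' → P.timeVal t + P.d j o m ≤ P.timeVal t') ↔
    ∀ a ∈ S, ∀ a' ∈ S, ¬ P.conflictO a a' := by
  constructor
  · rintro h _ ha _ ha' ⟨j, o, o', m, m', t, t', rfl, rfl, hlt, hconf⟩
    exact (h j o o' m m' t t' ha ha' hlt).not_gt hconf
  · intro h j o o' m m' t t' ha ha' hlt
    by_contra! hconf
    exact h _ ha _ ha' ⟨j, o, o', m, m', t, t', rfl, rfl, hlt, hconf⟩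

theorem machine_constraint_iff_forall_not_conflictM {S : P.Schedule} :
    (∀ (op op' : P.Op) (m : Fin P.nM) (t t' : Fin P.nT),
      (op, m, t) ∈ S → (op', m, t') ∈ S → op ≠ op' →
      ¬ (P.timeVal t ≤ P.timeVal t' ∧ P.timeVal t' < P.timeVal t + P.d op.1 op.2 m)) ↔
    ∀ a ∈ S, ∀ a' ∈ S, ¬ P.conflictM a a' := by
  constructor
  · rintro h ⟨op, m, t⟩ ha ⟨op', m', t'⟩ ha' ⟨hne, rfl, hconf⟩
    exact h op op' m t t' ha ha' hne hconf
  · intro h op op' m t t' ha ha' hne hconf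
    exact h _ ha _ ha' ⟨hne, rfl, hconf⟩

theorem forall_not_conflict_iff {S : P.Schedule} :
    (∀ a ∈ S, ∀ a' ∈ S, ¬ P.conflict a a') ↔
      (∀ a ∈ S, ∀ a' ∈ S, ¬ P.conflictA a a') ∧ (∀ a ∈ S, ∀ a' ∈ S, ¬ P.conflictO a a') ∧
        ∀ a ∈ S, ∀ a' ∈ S, ¬ P.conflictM a a' := by
  simp only [conflict, not_or]
  exact ⟨fun h => ⟨fun a ha a' ha' => (h a ha a' ha').1, fun a ha a' ha' => (h a ha a' ha').2.1,
      fun a ha a' ha' => (h a ha a' ha').2.2.2.1⟩,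
    fun ⟨hA, hO, hM⟩ a ha a' ha' =>
      ⟨hA a ha a' ha', hO a ha a' ha', hO a' ha' a ha, hM a ha a' ha', hM a' ha' a ha⟩⟩

theorem feasible_iff {S : P.Schedule} :
    P.Feasible S ↔ (∀ a ∈ S, P.isVertex a) ∧ (∀ a ∈ S, ∀ a' ∈ S, ¬ P.conflict a a') ∧
      S.card = Fintype.card P.Op := by
  rw [Feasible, Finset.forall_existsUnique_mem_iff_injOn_fst, injOn_fst_iff_forall_not_conflictA,
    order_constraint_iff_forall_not_conflictO, machine_constraint_iff_forall_not_conflictM,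
    forall_not_conflict_iff]
  unfold isVertex
  tauto

variable {N : ℕ} (ι : P.Assignment ≃ Fin N) (x : Fin N → Bool)

theorem mem_decode {a : P.Assignment} : a ∈ P.decode ι x ↔ x (ι a) = true := by
  simp [decode]

theorem forall_mem_decode_iff {q : P.Assignment → Prop} :
    (∀ a ∈ P.decode ι x, q a) ↔ ∀ i, x i = true → q (ι.symm i) := by
  rw [ι.forall_congr_left]
  simp only [mem_decode, Equiv.apply_symm_apply]

theorem forall₂_mem_decode_iff {q : P.Assignment → P.Assignment → Prop} :
    (∀ a ∈ P.decode ι x, ∀ a' ∈ P.decode ι x, q a a') ↔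
      ∀ i i', x i = true → x i' = true → q (ι.symm i) (ι.symm i') := by
  simp only [forall_mem_decode_iff]
  exact forall_congr' fun i => ⟨fun h i' hi hi' => h hi i' hi', fun h hi i' hi' => h i' hi hi'⟩

theorem card_decode :
    (P.decode ι x).card = (Finset.univ.filter fun i : Fin N => x i = true).card :=
  Finset.card_equiv ι fun a => by simp [mem_decode]

end FJSP

/-- Correspondence between feasible schedules and independent sets of the constraint
graph: a bit string `x` encodes a feasible FJSP schedule iff (i) every marked index lies
in the vertex set `V` of the constraint graph, (ii) the marked indices form an
independent set (no two marked indices are joined by an edge), and (iii) the Hamming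
weight of `x` equals the total number of operations `k = |O|`. -/
theorem stmt10 (P : FJSP) {N : ℕ} (ι : P.Assignment ≃ Fin N) (x : Fin N → Bool) :
    P.Feasible (P.decode ι x) ↔
      ((∀ i : Fin N, x i = true → P.isVertex (ι.symm i)) ∧
        (∀ i i' : Fin N, x i = true → x i' = true → ¬ P.conflict (ι.symm i) (ι.symm i')) ∧
        (Finset.univ.filter fun i : Fin N => x i = true).card = ∑ j : Fin P.nJ, P.p j) := by
  rw [FJSP.feasible_iff, FJSP.forall_mem_decode_iff, FJSP.forall₂_mem_decode_iff, FJSP.card_decode,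
    FJSP.card_op]
end
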